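/- arXiv:2603.28754 — 3 statements merged into one kernel-verified Lean document; each statement's English description precedes it below -/
import Mathlib

section
/- Let p₁,…,p_r ∈ ℂ be pairwise distinct, let R₁,…,R_r ∈ ℂ^{q×m}, let D ∈ ℂ^{q×m}, and set n = Σ_k rank(R_k). Then there exist a diagonal matrix A ∈ ℂ^{n×n} whose diagonal entries all belong to {p₁,…,p_r}, and matrices B ∈ ℂ^{n×m}, C ∈ ℂ^{q×n}, such that (A,B,C,D) is a realization of the transfer function K = Σ_k (X − p_k)⁻¹·R_k + D (entrywise over RatFunc ℂ); moreover this realization is controllable and observable. -/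
open Matrix

set_option synthInstance.maxHeartbeats 400000
set_option maxHeartbeats 1000000

/-- `(A,B,C,D)` is a realization (with state dimension `n`) of the `q × m`
transfer function `K` over `RatFunc ℂ`. -/
def IsRealization {n m q : ℕ} (K : Matrix (Fin q) (Fin m) (RatFunc ℂ))
    (A : Matrix (Fin n) (Fin n) ℂ) (B : Matrix (Fin n) (Fin m) ℂ)
    (C : Matrix (Fin q) (Fin n) ℂ) (D : Matrix (Fin q) (Fin m) ℂ) : Prop :=
  K = C.map (algebraMap ℂ (RatFunc ℂ)) *
      ((RatFunc.X : RatFunc ℂ) • (1 : Matrix (Fin n) (Fin n) (RatFunc ℂ)) -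
        A.map (algebraMap ℂ (RatFunc ℂ)))⁻¹ *
      B.map (algebraMap ℂ (RatFunc ℂ)) + D.map (algebraMap ℂ (RatFunc ℂ))

/-- `(A,B)` is controllable: the block matrix `[B, AB, …, A^{n-1}B]` has rank `n`. -/
def Controllable {n m : ℕ} (A : Matrix (Fin n) (Fin n) ℂ)
    (B : Matrix (Fin n) (Fin m) ℂ) : Prop :=
  (Matrix.of fun (i : Fin n) (p : Fin n × Fin m) => (A ^ (p.1 : ℕ) * B) i p.2).rank = n

/-- `(C,A)` is observable: the block matrix with block rows `C, CA, …, CA^{n-1}` has rank `n`. -/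
def Observable {n q : ℕ} (C : Matrix (Fin q) (Fin n) ℂ)
    (A : Matrix (Fin n) (Fin n) ℂ) : Prop :=
  (Matrix.of fun (p : Fin n × Fin q) (j : Fin n) => (C * A ^ (p.1 : ℕ)) p.2 j).rank = n

/-- `(A,B,C,D)` satisfies the support `(SA,SB,SC,SD)` (entries in `{0,1}` encoded by `Bool`). -/
def SatisfiesSupport {n m q : ℕ}
    (SA : Matrix (Fin n) (Fin n) Bool) (SB : Matrix (Fin n) (Fin m) Bool)
    (SC : Matrix (Fin q) (Fin n) Bool) (SD : Matrix (Fin q) (Fin m) Bool)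
    (A : Matrix (Fin n) (Fin n) ℂ) (B : Matrix (Fin n) (Fin m) ℂ)
    (C : Matrix (Fin q) (Fin n) ℂ) (D : Matrix (Fin q) (Fin m) ℂ) : Prop :=
  (∀ i j, SA i j = false → A i j = 0) ∧
  (∀ i j, SB i j = false → B i j = 0) ∧
  (∀ i j, SC i j = false → C i j = 0) ∧
  (∀ i j, SD i j = false → D i j = 0)

/-- Rank factorization over ℂ. -/
lemma exists_rank_factorization {q m : ℕ} (R : Matrix (Fin q) (Fin m) ℂ) :
    ∃ (C : Matrix (Fin q) (Fin R.rank) ℂ) (B : Matrix (Fin R.rank) (Fin m) ℂ),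
      R = C * B ∧ (∀ c, C *ᵥ c = 0 → c = 0) ∧ (∀ c, c ᵥ* B = 0 → c = 0) := by
  classical
  set L := R.mulVecLin with hL
  have hfr : Module.finrank ℂ (LinearMap.range L) = R.rank := rfl
  let b : Module.Basis (Fin R.rank) ℂ (LinearMap.range L) := Module.finBasisOfFinrankEq ℂ _ hfr
  set C : Matrix (Fin q) (Fin R.rank) ℂ :=
    LinearMap.toMatrix b (Pi.basisFun ℂ (Fin q)) (LinearMap.range L).subtype with hC
  set B : Matrix (Fin R.rank) (Fin m) ℂ :=
    LinearMap.toMatrix (Pi.basisFun ℂ (Fin m)) b L.rangeRestrict with hB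
  obtain ⟨g, hg⟩ := (LinearMap.range L).subtype.exists_leftInverse_of_injective
    (Submodule.ker_subtype _)
  obtain ⟨s, hs⟩ := L.rangeRestrict.exists_rightInverse_of_surjective
    (LinearMap.range_eq_top.mpr L.surjective_rangeRestrict)
  refine ⟨C, B, ?_, ?_, ?_⟩
  · have h1 : C * B = LinearMap.toMatrix (Pi.basisFun ℂ (Fin m)) (Pi.basisFun ℂ (Fin q))
        ((LinearMap.range L).subtype ∘ₗ L.rangeRestrict) :=
      (LinearMap.toMatrix_comp _ b _ _ _).symm
    have h2 : (LinearMap.range L).subtype ∘ₗ L.rangeRestrict = L := by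
      ext x; simp
    rw [h1, h2]
    ext i j
    simp [LinearMap.toMatrix_apply, hL, Matrix.mulVecLin_apply, Matrix.mulVec, dotProduct,
      Pi.single_apply]
  · -- left inverse for C
    set G : Matrix (Fin R.rank) (Fin q) ℂ := LinearMap.toMatrix (Pi.basisFun ℂ (Fin q)) b g with hG
    have hGC : G * C = 1 := by
      rw [hG, hC, ← LinearMap.toMatrix_comp _ (Pi.basisFun ℂ (Fin q)) _ _ _, hg,
        LinearMap.toMatrix_id]
    intro c hc
    have : (G * C) *ᵥ c = 0 := by
      rw [← Matrix.mulVec_mulVec, hc, Matrix.mulVec_zero]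
    rwa [hGC, Matrix.one_mulVec] at this
  · set S : Matrix (Fin m) (Fin R.rank) ℂ := LinearMap.toMatrix b (Pi.basisFun ℂ (Fin m)) s
      with hS
    have hBS : B * S = 1 := by
      rw [hB, hS, ← LinearMap.toMatrix_comp _ (Pi.basisFun ℂ (Fin m)) _ _ _, hs,
        LinearMap.toMatrix_id]
    intro c hc
    have : c ᵥ* (B * S) = 0 := by
      rw [← Matrix.vecMul_vecMul, hc, Matrix.zero_vecMul]
    rwa [hBS, Matrix.vecMul_one] at this


lemma rows_linind {r m N : ℕ} {n : Fin r → ℕ} (hN : N = ∑ k, n k)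
    (p : Fin r → ℂ) (hp : Function.Injective p)
    (M : ∀ k, Matrix (Fin (n k)) (Fin m) ℂ)
    (hM : ∀ k (c : Fin (n k) → ℂ), c ᵥ* M k = 0 → c = 0)
    (e : Fin N ≃ Σ k, Fin (n k)) :
    LinearIndependent ℂ
      (fun i (sj : Fin N × Fin m) => p (e i).1 ^ (sj.1 : ℕ) * M (e i).1 (e i).2 sj.2) := by
  classical
  rw [Fintype.linearIndependent_iff]
  intro g hg i0
  set c : (Σ k, Fin (n k)) → ℂ := fun x => g (e.symm x) with hc
  set u : ∀ k, Fin m → ℂ := fun k j => ∑ t, c ⟨k, t⟩ * M k t j with hu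
  have hsum : ∀ (s : Fin N) (j : Fin m), ∑ k, p k ^ (s : ℕ) * u k j = 0 := by
    intro s j
    have h1 := congrFun hg (s, j)
    simp only [Finset.sum_apply, Pi.smul_apply, smul_eq_mul, Pi.zero_apply] at h1
    have h2 : ∑ i, g i * (p (e i).1 ^ (s : ℕ) * M (e i).1 (e i).2 j)
        = ∑ x : Σ k, Fin (n k), c x * (p x.1 ^ (s : ℕ) * M x.1 x.2 j) := by
      rw [← Equiv.sum_comp e (fun x => c x * (p x.1 ^ (s : ℕ) * M x.1 x.2 j))]
      refine Finset.sum_congr rfl fun i _ => ?_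
      simp [hc]
    rw [h2, ← Finset.univ_sigma_univ, Finset.sum_sigma] at h1
    rw [← h1]
    refine Finset.sum_congr rfl fun k _ => ?_
    rw [hu, Finset.mul_sum]
    refine Finset.sum_congr rfl fun t _ => by ring
  set S : Finset (Fin r) := Finset.univ.filter (fun k => n k ≠ 0) with hSdef
  have hSu : ∀ k ∉ S, u k = 0 := by
    intro k hk
    have h0 : n k = 0 := by simpa [hSdef] using hk
    have he : IsEmpty (Fin (n k)) := by rw [h0]; infer_instance
    funext j
    rw [hu]
    exact Finset.sum_of_isEmpty _
  have hScard : S.card ≤ N := by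
    have h1 : S.card ≤ ∑ k ∈ S, n k := by
      rw [Finset.card_eq_sum_ones]
      exact Finset.sum_le_sum fun k hk =>
        Nat.one_le_iff_ne_zero.mpr (by simpa [hSdef] using hk)
    have h2 : ∑ k ∈ S, n k ≤ ∑ k, n k := Finset.sum_le_sum_of_subset (Finset.subset_univ S)
    omega
  have hpoly : ∀ (f : Polynomial ℂ), f.natDegree < N → ∀ j,
      ∑ k, f.eval (p k) * u k j = 0 := by
    intro f hf j
    have hev : ∀ k : Fin r, f.eval (p k)
        = ∑ s ∈ Finset.range N, f.coeff s * p k ^ s :=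
      fun k => Polynomial.eval_eq_sum_range' hf _
    calc ∑ k, f.eval (p k) * u k j
        = ∑ k, ∑ s ∈ Finset.range N, f.coeff s * (p k ^ s * u k j) := by
          refine Finset.sum_congr rfl fun k _ => ?_
          rw [hev k, Finset.sum_mul]
          exact Finset.sum_congr rfl fun s _ => by ring
      _ = ∑ s ∈ Finset.range N, f.coeff s * ∑ k, p k ^ s * u k j := by
          rw [Finset.sum_comm]
          exact Finset.sum_congr rfl fun s _ => by rw [Finset.mul_sum]
      _ = 0 := by
          refine Finset.sum_eq_zero fun s hs => ?_
          have hsN : s < N := Finset.mem_range.mp hs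
          have := hsum ⟨s, hsN⟩ j
          simp only [Fin.val_mk] at this
          rw [this, mul_zero]
  have hu0 : ∀ k, u k = 0 := by
    intro k0
    by_cases hk0 : k0 ∈ S
    · have hNpos : 0 < N := lt_of_lt_of_le (Finset.card_pos.mpr ⟨k0, hk0⟩) hScard
      have hinj : Set.InjOn p S := hp.injOn
      set f := Lagrange.basis S p k0 with hf
      have hdeg : f.natDegree < N := by
        rw [hf, Lagrange.natDegree_basis hinj hk0]
        omega
      funext j
      have h0 := hpoly f hdeg j
      rw [Finset.sum_eq_single k0 ?_ ?_] at h0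
      · rwa [hf, Lagrange.eval_basis_self hinj hk0, one_mul] at h0
      · intro k _ hne
        by_cases hkS : k ∈ S
        · rw [hf, Lagrange.eval_basis_of_ne (Ne.symm hne) hkS, zero_mul]
        · rw [hSu k hkS]; simp
      · intro h; exact absurd (Finset.mem_univ k0) h
    · exact hSu k0 hk0
  have hck : (fun t => c ⟨(e i0).1, t⟩) = 0 := by
    refine hM _ _ ?_
    funext j
    simpa [Matrix.vecMul, dotProduct, hu] using congrFun (hu0 (e i0).1) j
  have := congrFun hck (e i0).2
  simpa [hc, Sigma.eta] using this

/-- Existence of a minimal modal realization: for pairwise distinct poles `p k` with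
residue matrices `R k` and feedthrough `D`, the transfer function
`K = ∑ k (X − p k)⁻¹ R k + D` admits a realization of state dimension
`n = ∑ k rank (R k)` with diagonal `A` whose diagonal entries are among the `p k`;
moreover this realization is controllable and observable. -/
theorem modal_realization_exists {r m q : ℕ}
    (p : Fin r → ℂ) (hp : Function.Injective p)
    (R : Fin r → Matrix (Fin q) (Fin m) ℂ) (D : Matrix (Fin q) (Fin m) ℂ) :
    ∃ (A : Matrix (Fin (∑ k, (R k).rank)) (Fin (∑ k, (R k).rank)) ℂ)
      (B : Matrix (Fin (∑ k, (R k).rank)) (Fin m) ℂ)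
      (C : Matrix (Fin q) (Fin (∑ k, (R k).rank)) ℂ),
      (∀ i j, i ≠ j → A i j = 0) ∧
      (∀ i, ∃ k, A i i = p k) ∧
      IsRealization
        ((∑ k, (RatFunc.X - RatFunc.C (p k))⁻¹ • (R k).map (algebraMap ℂ (RatFunc ℂ))) +
          D.map (algebraMap ℂ (RatFunc ℂ))) A B C D ∧
      Controllable A B ∧ Observable C A := by
  classical
  obtain ⟨Cm, Bm, hfact, hCm, hBm⟩ :
      ∃ (Cm : ∀ k, Matrix (Fin q) (Fin ((R k).rank)) ℂ)
        (Bm : ∀ k, Matrix (Fin ((R k).rank)) (Fin m) ℂ),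
        (∀ k, R k = Cm k * Bm k) ∧ (∀ k c, Cm k *ᵥ c = 0 → c = 0) ∧
        (∀ k c, c ᵥ* Bm k = 0 → c = 0) := by
    choose Cm Bm h1 h2 h3 using fun k => exists_rank_factorization (R k)
    exact ⟨Cm, Bm, h1, h2, h3⟩
  set N := ∑ k, (R k).rank with hNdef
  have hcard : Fintype.card (Σ k, Fin ((R k).rank)) = N := by
    simp [hNdef]
  let e : Fin N ≃ Σ k, Fin ((R k).rank) := (Fintype.equivFinOfCardEq hcard).symm
  set w : Fin N → ℂ := fun i => p (e i).1 with hw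
  set A : Matrix (Fin N) (Fin N) ℂ := diagonal w with hA
  set B : Matrix (Fin N) (Fin m) ℂ := of (fun i j => Bm (e i).1 (e i).2 j) with hB
  set C : Matrix (Fin q) (Fin N) ℂ := of (fun i x => Cm (e x).1 i (e x).2) with hC
  set f := algebraMap ℂ (RatFunc ℂ) with hfdef
  have hXC : ∀ c : ℂ, (RatFunc.X - RatFunc.C c : RatFunc ℂ) ≠ 0 := by
    intro c h
    have h2 : algebraMap (Polynomial ℂ) (RatFunc ℂ) (Polynomial.X - Polynomial.C c)
        = algebraMap (Polynomial ℂ) (RatFunc ℂ) 0 := by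
      rw [map_sub, map_zero, RatFunc.algebraMap_X, RatFunc.algebraMap_C, h]
    exact Polynomial.X_sub_C_ne_zero c (RatFunc.algebraMap_injective ℂ h2)
  refine ⟨A, B, C, ?_, ?_, ?_, ?_, ?_⟩
  · intro i j hij
    exact diagonal_apply_ne _ hij
  · intro i
    exact ⟨(e i).1, diagonal_apply_eq _ _⟩
  · unfold IsRealization
    set gfun : Fin N → RatFunc ℂ := fun i => RatFunc.X - RatFunc.C (w i) with hgfun
    have hdiag : ((RatFunc.X : RatFunc ℂ) • (1 : Matrix (Fin N) (Fin N) (RatFunc ℂ)) - A.map f)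
        = diagonal gfun := by
      rw [smul_one_eq_diagonal, hA, diagonal_map (map_zero _), diagonal_sub]
      congr 1
    have hinv : (diagonal gfun)⁻¹ = diagonal (fun i => (gfun i)⁻¹) := by
      apply inv_eq_right_inv
      rw [diagonal_mul_diagonal]
      rw [show (fun i => gfun i * (gfun i)⁻¹) = fun _ => (1 : RatFunc ℂ) from
        funext fun i => mul_inv_cancel₀ (hXC _)]
      exact diagonal_one
    rw [hdiag, hinv]
    ext i j
    simp only [Matrix.add_apply, Matrix.sum_apply, Matrix.smul_apply, smul_eq_mul,
      Matrix.map_apply]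
    congr 1
    have hrhs : (C.map f * diagonal (fun i => (gfun i)⁻¹) * B.map f) i j
        = ∑ x : Fin N, f (Cm (e x).1 i (e x).2) * (gfun x)⁻¹ * f (Bm (e x).1 (e x).2 j) := by
      rw [Matrix.mul_apply]
      refine Finset.sum_congr rfl fun x _ => ?_
      rw [Matrix.mul_diagonal]
      simp [hB, hC]
    rw [hrhs]
    have hre : ∑ x : Fin N, f (Cm (e x).1 i (e x).2) * (gfun x)⁻¹ * f (Bm (e x).1 (e x).2 j)
        = ∑ y : Σ k, Fin ((R k).rank),
            f (Cm y.1 i y.2) * (RatFunc.X - RatFunc.C (p y.1))⁻¹ * f (Bm y.1 y.2 j) := by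
      rw [← Equiv.sum_comp e (fun y =>
        f (Cm y.1 i y.2) * (RatFunc.X - RatFunc.C (p y.1))⁻¹ * f (Bm y.1 y.2 j))]
    rw [hre, ← Finset.univ_sigma_univ, Finset.sum_sigma]
    refine Finset.sum_congr rfl fun k _ => ?_
    have h1 : (R k) i j = ∑ t, Cm k i t * Bm k t j := by
      conv_lhs => rw [hfact k]
      rw [Matrix.mul_apply]
    have h2 : f ((R k) i j) = ∑ t, f (Cm k i t) * f (Bm k t j) := by
      rw [h1, map_sum]
      exact Finset.sum_congr rfl fun t _ => map_mul _ _ _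
    rw [h2, Finset.mul_sum]
    exact Finset.sum_congr rfl fun t _ => by ring
  · unfold Controllable
    have hli := rows_linind hNdef p hp Bm hBm e
    have hmat : (of fun i (pr : Fin N × Fin m) => (A ^ (pr.1 : ℕ) * B) i pr.2)
        = of (fun i (pr : Fin N × Fin m) =>
            p (e i).1 ^ (pr.1 : ℕ) * Bm (e i).1 (e i).2 pr.2) := by
      ext i pr
      rw [of_apply, of_apply, hA, diagonal_pow, diagonal_mul]
      simp [hB, hw]
    rw [hmat]
    have hrank : (of (fun i (pr : Fin N × Fin m) =>
        p (e i).1 ^ (pr.1 : ℕ) * Bm (e i).1 (e i).2 pr.2)).rank = Fintype.card (Fin N) :=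
      LinearIndependent.rank_matrix hli
    rw [hrank, Fintype.card_fin]
  · unfold Observable
    rw [← Matrix.rank_transpose]
    have hli := rows_linind (m := q) hNdef p hp (fun k => (Cm k)ᵀ)
      (fun k c hc => hCm k c (by rwa [Matrix.vecMul_transpose] at hc)) e
    have hmat : (of fun (pr : Fin N × Fin q) j => (C * A ^ (pr.1 : ℕ)) pr.2 j)ᵀ
        = of (fun j (pr : Fin N × Fin q) =>
            p (e j).1 ^ (pr.1 : ℕ) * (Cm (e j).1)ᵀ (e j).2 pr.2) := by
      ext j pr
      rw [transpose_apply, of_apply, of_apply, hA, diagonal_pow, mul_diagonal]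
      simp [hC, hw, transpose_apply]
      ring
    rw [hmat]
    have hrank : (of (fun j (pr : Fin N × Fin q) =>
        p (e j).1 ^ (pr.1 : ℕ) * (Cm (e j).1)ᵀ (e j).2 pr.2)).rank = Fintype.card (Fin N) :=
      LinearIndependent.rank_matrix hli
    rw [hrank, Fintype.card_fin]
end

section
/- Let K be a q×m transfer function with a minimal (controllable and observable) realization (A_p,B_p,C_p,D_p) of state dimension n, and let S be a support of dimensions (n,m,q). Then there exists a realization (A,B,C,D) of K with state dimension n such that A, B, C, D have all entries real and (A,B,C,D) satisfies S, if and only if there exists an invertible matrix T ∈ ℂ^{n×n} such that the matrices T⁻¹A_pT, T⁻¹B_p, C_pT, D_p all have real entries and the realization (T⁻¹A_pT, T⁻¹B_p, C_pT, D_p) satisfies S. -/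
open Matrix

set_option synthInstance.maxHeartbeats 400000

/-- A complex matrix has all entries real. -/
def IsRealMatrix {a b : ℕ} (M : Matrix (Fin a) (Fin b) ℂ) : Prop :=
  ∀ i j, (M i j).im = 0

open Polynomial

noncomputable section

abbrev ψ : Polynomial ℂ →+* RatFunc ℂ := algebraMap _ _
abbrev φc : ℂ →+* RatFunc ℂ := algebraMap _ _

lemma φc_eq (c : ℂ) : φc c = ψ (Polynomial.C c) := by
  rw [IsScalarTower.algebraMap_apply ℂ (Polynomial ℂ) (RatFunc ℂ) c, Polynomial.algebraMap_eq]

lemma ψ_ne_zero {q : Polynomial ℂ} (hq : q ≠ 0) : ψ q ≠ 0 := by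
  intro h
  exact hq (RatFunc.algebraMap_injective ℂ (by simpa using h))

/-- strictly proper rational function -/
def SP (f : RatFunc ℂ) : Prop :=
  ∃ p q : Polynomial ℂ, q ≠ 0 ∧ p.degree < q.degree ∧ f = ψ p / ψ q

lemma SP_zero : SP 0 := ⟨0, 1, one_ne_zero, by simp, by simp⟩

lemma SP_add {f g : RatFunc ℂ} (hf : SP f) (hg : SP g) : SP (f + g) := by
  obtain ⟨p, u, hu, hpu, rfl⟩ := hf
  obtain ⟨r, s, hs, hrs, rfl⟩ := hg
  refine ⟨p * s + u * r, u * s, mul_ne_zero hu hs, ?_, ?_⟩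
  · refine lt_of_le_of_lt (degree_add_le _ _) (max_lt ?_ ?_)
    · rw [degree_mul, degree_mul]
      exact WithBot.add_lt_add_right (degree_ne_bot.mpr hs) hpu
    · rw [degree_mul, degree_mul]
      exact WithBot.add_lt_add_left (degree_ne_bot.mpr hu) hrs
  · rw [div_add_div _ _ (ψ_ne_zero hu) (ψ_ne_zero hs), map_add]
    simp [_root_.map_mul]

lemma SP_const_mul {f : RatFunc ℂ} (c : ℂ) (hf : SP f) : SP (φc c * f) := by
  obtain ⟨p, u, hu, hpu, rfl⟩ := hf
  refine ⟨Polynomial.C c * p, u, hu, ?_, ?_⟩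
  · refine lt_of_le_of_lt (degree_mul_le _ _) ?_
    calc (Polynomial.C c).degree + p.degree ≤ 0 + p.degree := by
          exact add_le_add degree_C_le le_rfl
      _ = p.degree := by rw [zero_add]
      _ < u.degree := hpu
  · rw [_root_.map_mul, mul_div_assoc, φc_eq]

lemma SP_mul_const {f : RatFunc ℂ} (c : ℂ) (hf : SP f) : SP (f * φc c) := by
  rw [mul_comm]; exact SP_const_mul c hf

lemma SP_sum {ι : Type*} [DecidableEq ι] (s : Finset ι) (f : ι → RatFunc ℂ) (h : ∀ i ∈ s, SP (f i)) :
    SP (∑ i ∈ s, f i) := by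
  induction s using Finset.induction_on with
  | empty => simpa using SP_zero
  | insert _ _ hx ih =>
    rename_i a t
    rw [Finset.sum_insert hx]
    exact SP_add (h a (Finset.mem_insert_self a t))
      (ih fun i hi => h i (Finset.mem_insert_of_mem hi))

lemma SP_neg {f : RatFunc ℂ} (hf : SP f) : SP (-f) := by
  have := SP_const_mul (-1) hf
  simpa using this

lemma SP_sub {f g : RatFunc ℂ} (hf : SP f) (hg : SP g) : SP (f - g) := by
  simpa [sub_eq_add_neg] using SP_add hf (SP_neg hg)

/-- a constant which is strictly proper is zero -/
lemma eq_zero_of_SP_const {c : ℂ} (h : SP (φc c)) : c = 0 := by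
  obtain ⟨p, u, hu, hpu, heq⟩ := h
  by_contra hc
  have h1 : ψ (Polynomial.C c) * ψ u = ψ p := by
    rw [← φc_eq, heq, div_mul_cancel₀ _ (ψ_ne_zero hu)]
  rw [← _root_.map_mul] at h1
  have h2 : Polynomial.C c * u = p := RatFunc.algebraMap_injective ℂ h1
  have hd : p.degree = u.degree := by rw [← h2, degree_mul, degree_C hc, zero_add]
  exact absurd hpu (by rw [hd]; exact lt_irrefl _)

lemma const_eq_of_SP {c d : ℂ} {f g : RatFunc ℂ} (hf : SP f) (hg : SP g)
    (h : φc c + f = φc d + g) : c = d := by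
  have : φc (c - d) = g - f := by
    rw [map_sub]
    linear_combination h
  have : SP (φc (c - d)) := this ▸ SP_sub hg hf
  have := eq_zero_of_SP_const this
  exact sub_eq_zero.mp this

section Resolvent
variable {n : ℕ} (A : Matrix (Fin n) (Fin n) ℂ)

/-- the resolvent matrix over RatFunc -/
def resMat : Matrix (Fin n) (Fin n) (RatFunc ℂ) :=
  (RatFunc.X : RatFunc ℂ) • (1 : Matrix (Fin n) (Fin n) (RatFunc ℂ)) - A.map φc

lemma resMat_eq_map_charmatrix : resMat A = (Matrix.charmatrix A).map ψ := by
  ext i j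
  simp only [resMat, Matrix.map_apply, Matrix.charmatrix_apply, Matrix.sub_apply,
    Matrix.smul_apply, Matrix.one_apply, Matrix.diagonal_apply, map_sub]
  rw [φc_eq]
  congr 1
  by_cases h : i = j <;> simp [h, RatFunc.algebraMap_X]

lemma det_resMat : (resMat A).det = ψ (Matrix.charpoly A) := by
  rw [resMat_eq_map_charmatrix, Matrix.charpoly]
  exact (RingHom.map_det ψ _).symm

lemma charpoly_ne_zero : Matrix.charpoly A ≠ 0 := (Matrix.charpoly_monic A).ne_zero

lemma det_resMat_ne_zero : (resMat A).det ≠ 0 := by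
  rw [det_resMat]; exact ψ_ne_zero (charpoly_ne_zero A)

lemma isUnit_det_resMat : IsUnit (resMat A).det :=
  isUnit_iff_ne_zero.mpr (det_resMat_ne_zero A)

lemma resMat_mul_inv : resMat A * (resMat A)⁻¹ = 1 :=
  Matrix.mul_nonsing_inv _ (isUnit_det_resMat A)

lemma resMat_inv_mul : (resMat A)⁻¹ * resMat A = 1 :=
  Matrix.nonsing_inv_mul _ (isUnit_det_resMat A)

lemma degree_det_le' {N : ℕ} (M : Matrix (Fin N) (Fin N) (Polynomial ℂ)) (d : Fin N → ℕ)
    (h : ∀ k l, (M k l).degree ≤ ((d k : ℕ) : WithBot ℕ)) :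
    M.det.degree ≤ ((((∑ k, d k) : ℕ)) : WithBot ℕ) := by
  rw [Matrix.det_apply]
  refine le_trans (Polynomial.degree_sum_le _ _) (Finset.sup_le fun σ _ => ?_)
  have h1 : (Equiv.Perm.sign σ • ∏ i, M (σ i) i).degree = (∏ i, M (σ i) i).degree := by
    rcases Int.units_eq_one_or (Equiv.Perm.sign σ) with hs | hs <;>
      simp [hs, Units.smul_def]
  rw [h1]
  refine le_trans (Polynomial.degree_prod_le _ _) ?_
  rw [Nat.cast_sum, ← Equiv.sum_comp σ (fun k => ((d k : ℕ) : WithBot ℕ))]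
  exact Finset.sum_le_sum fun i _ => h (σ i) i

lemma degree_charmatrix_le (k l : Fin n) : ((Matrix.charmatrix A) k l).degree ≤ 1 := by
  rw [Matrix.charmatrix_apply]
  refine le_trans (Polynomial.degree_sub_le _ _) (max_le ?_ ?_)
  · by_cases h : k = l <;> simp [Matrix.diagonal_apply, h]
  · exact le_trans Polynomial.degree_C_le (by norm_num)

lemma degree_adjugate_charmatrix_lt (i j : Fin n) :
    ((Matrix.charmatrix A).adjugate i j).degree < (Matrix.charpoly A).degree := by
  have hn : 0 < n := j.pos
  have hcp : (Matrix.charpoly A).degree = (n : WithBot ℕ) := by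
    rw [Polynomial.degree_eq_natDegree (charpoly_ne_zero A),
      Matrix.charpoly_natDegree_eq_dim]
    simp
  rw [Matrix.adjugate_apply, hcp]
  set d : Fin n → ℕ := fun k => if k = j then 0 else 1 with hd
  have hbound : ∀ k l, (((Matrix.charmatrix A).updateRow j (Pi.single i 1)) k l).degree
      ≤ ((d k : ℕ) : WithBot ℕ) := by
    intro k l
    by_cases hk : k = j
    · subst hk
      rw [Matrix.updateRow_self]
      simp only [hd, if_pos rfl, Nat.cast_zero]
      by_cases hl : l = i
      · subst hl; simp [Pi.single_eq_same]
      · simp [Pi.single_eq_of_ne hl]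
    · rw [Matrix.updateRow_ne hk]
      simp only [hd, if_neg hk, Nat.cast_one]
      exact degree_charmatrix_le A k l
  refine lt_of_le_of_lt (degree_det_le' _ d hbound) ?_
  have hsum : (∑ k, d k) = n - 1 := by
    have : (∑ k, d k) = ∑ k ∈ Finset.univ.filter (fun k => ¬ k = j), 1 := by
      rw [Finset.sum_filter]
      exact Finset.sum_congr rfl fun k _ => by by_cases hk : k = j <;> simp [hd, hk]
    rw [this, Finset.sum_const, smul_eq_mul, mul_one, Finset.filter_ne',
      Finset.card_erase_of_mem (Finset.mem_univ j), Finset.card_univ, Fintype.card_fin]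
  rw [hsum]
  exact_mod_cast Nat.sub_lt hn one_pos

lemma SP_resMat_inv (i j : Fin n) : SP ((resMat A)⁻¹ i j) := by
  have hinv : (resMat A)⁻¹ = ((resMat A).det)⁻¹ • (resMat A).adjugate := by
    rw [Matrix.inv_def, Ring.inverse_eq_inv]
  have hadj : (resMat A).adjugate = ((Matrix.charmatrix A).adjugate).map ψ := by
    rw [resMat_eq_map_charmatrix]
    exact (RingHom.map_adjugate ψ _).symm
  refine ⟨(Matrix.charmatrix A).adjugate i j, Matrix.charpoly A, charpoly_ne_zero A,
    degree_adjugate_charmatrix_lt A i j, ?_⟩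
  rw [hinv, Matrix.smul_apply, hadj, Matrix.map_apply, det_resMat, smul_eq_mul,
    mul_comm, div_eq_mul_inv]

end Resolvent

section Markov
variable {n m q : ℕ}

lemma SP_sandwich {a b : ℕ} (P : Matrix (Fin a) (Fin n) ℂ) (Q : Matrix (Fin n) (Fin b) ℂ)
    (G : Matrix (Fin n) (Fin n) (RatFunc ℂ)) (hG : ∀ i j, SP (G i j)) :
    ∀ i j, SP ((P.map φc * G * Q.map φc) i j) := by
  intro i j
  rw [Matrix.mul_apply]
  refine SP_sum _ _ fun s _ => ?_
  rw [Matrix.mul_apply]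
  rw [Finset.sum_mul]
  refine SP_sum _ _ fun t _ => ?_
  rw [Matrix.map_apply, Matrix.map_apply]
  exact SP_mul_const _ (SP_const_mul _ (hG t s))

/-- the k-th "tail" term -/
def tailG (A : Matrix (Fin n) (Fin n) ℂ) (B : Matrix (Fin n) (Fin m) ℂ)
    (C : Matrix (Fin q) (Fin n) ℂ) (k : ℕ) : Matrix (Fin q) (Fin m) (RatFunc ℂ) :=
  (C * A ^ k).map φc * (resMat A)⁻¹ * B.map φc

lemma SP_tailG (A : Matrix (Fin n) (Fin n) ℂ) (B : Matrix (Fin n) (Fin m) ℂ)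
    (C : Matrix (Fin q) (Fin n) ℂ) (k : ℕ) (i : Fin q) (j : Fin m) :
    SP (tailG A B C k i j) :=
  SP_sandwich _ _ _ (SP_resMat_inv A) i j

lemma smul_resMat_inv (A : Matrix (Fin n) (Fin n) ℂ) :
    (RatFunc.X : RatFunc ℂ) • (resMat A)⁻¹ = 1 + A.map φc * (resMat A)⁻¹ := by
  have h := resMat_mul_inv A
  set R := (resMat A)⁻¹ with hR
  rw [resMat, sub_mul, Matrix.smul_mul, one_mul, sub_eq_iff_eq_add] at h
  exact h

lemma tailG_shift (A : Matrix (Fin n) (Fin n) ℂ) (B : Matrix (Fin n) (Fin m) ℂ)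
    (C : Matrix (Fin q) (Fin n) ℂ) (k : ℕ) :
    (RatFunc.X : RatFunc ℂ) • tailG A B C k
      = (C * A ^ k * B).map φc + tailG A B C (k + 1) := by
  rw [tailG, ← Matrix.smul_mul, ← Matrix.mul_smul, smul_resMat_inv, Matrix.mul_add,
    Matrix.mul_one, Matrix.add_mul, tailG]
  congr 2
  · exact (Matrix.map_mul).symm
  · rw [← Matrix.mul_assoc, ← Matrix.map_mul, Matrix.mul_assoc, ← pow_succ]

lemma matrix_const_extract {a b : ℕ} {M M' : Matrix (Fin a) (Fin b) ℂ}
    {G G' : Matrix (Fin a) (Fin b) (RatFunc ℂ)}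
    (hG : ∀ i j, SP (G i j)) (hG' : ∀ i j, SP (G' i j))
    (h : M.map φc + G = M'.map φc + G') : M = M' ∧ G = G' := by
  have hM : M = M' := by
    ext i j
    have := congrFun (congrFun h i) j
    simp only [Matrix.add_apply, Matrix.map_apply] at this
    exact const_eq_of_SP (hG i j) (hG' i j) this
  refine ⟨hM, ?_⟩
  rw [hM] at h
  exact add_left_cancel h

lemma markov_eq {K : Matrix (Fin q) (Fin m) (RatFunc ℂ)}
    {A : Matrix (Fin n) (Fin n) ℂ} {B : Matrix (Fin n) (Fin m) ℂ}
    {C : Matrix (Fin q) (Fin n) ℂ} {D : Matrix (Fin q) (Fin m) ℂ}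
    {A' : Matrix (Fin n) (Fin n) ℂ} {B' : Matrix (Fin n) (Fin m) ℂ}
    {C' : Matrix (Fin q) (Fin n) ℂ} {D' : Matrix (Fin q) (Fin m) ℂ}
    (h : C.map φc * (resMat A)⁻¹ * B.map φc + D.map φc
       = C'.map φc * (resMat A')⁻¹ * B'.map φc + D'.map φc) :
    D = D' ∧ ∀ k, C * A ^ k * B = C' * A' ^ k * B' := by
  have h0 : D = D' ∧ tailG A B C 0 = tailG A' B' C' 0 := by
    have heq : D.map φc + tailG A B C 0 = D'.map φc + tailG A' B' C' 0 := by
      simp only [tailG, pow_zero, Matrix.mul_one]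
      rw [add_comm (D.map φc) _, add_comm (D'.map φc) _]
      exact h
    exact matrix_const_extract (SP_tailG A B C 0) (SP_tailG A' B' C' 0) heq
  have key : ∀ k, tailG A B C k = tailG A' B' C' k := by
    intro k
    induction k with
    | zero => exact h0.2
    | succ k ih =>
      have hsm := congrArg (fun M => (RatFunc.X : RatFunc ℂ) • M) ih
      simp only [tailG_shift] at hsm
      exact (matrix_const_extract (SP_tailG A B C (k + 1))
        (SP_tailG A' B' C' (k + 1)) hsm).2
  refine ⟨h0.1, fun k => ?_⟩
  have hsm := congrArg (fun M => (RatFunc.X : RatFunc ℂ) • M) (key k)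
  simp only [tailG_shift] at hsm
  exact (matrix_const_extract (SP_tailG A B C (k + 1))
    (SP_tailG A' B' C' (k + 1)) hsm).1

end Markov

section RankInv

lemma exists_right_inverse {a b : Type*} [Fintype a] [Fintype b] [DecidableEq a]
    [DecidableEq b] (M : Matrix a b ℂ) (h : M.rank = Fintype.card a) :
    ∃ R : Matrix b a ℂ, M * R = 1 := by
  have hsurj : Function.Surjective M.mulVecLin := by
    rw [← LinearMap.range_eq_top]
    apply Submodule.eq_top_of_finrank_eq
    rw [← Matrix.rank, h]
    simp
  choose x hx using fun i : a => hsurj (Pi.single i 1)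
  refine ⟨Matrix.of fun j i => x i j, ?_⟩
  ext k i
  rw [Matrix.mul_apply, Matrix.one_apply]
  have := congrFun (hx i) k
  simp only [Matrix.mulVecLin_apply, Matrix.mulVec, dotProduct] at this
  rw [show (∑ j, M k j * Matrix.of (fun j i => x i j) j i) = ∑ j, M k j * x i j from rfl, this,
    Pi.single_apply]

lemma exists_left_inverse {a b : Type*} [Fintype a] [Fintype b] [DecidableEq a]
    [DecidableEq b] (M : Matrix a b ℂ) (h : M.rank = Fintype.card b) :
    ∃ L : Matrix b a ℂ, L * M = 1 := by
  obtain ⟨R, hR⟩ := exists_right_inverse M.transpose (by rwa [Matrix.rank_transpose])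
  refine ⟨R.transpose, ?_⟩
  have := congrArg Matrix.transpose hR
  rwa [Matrix.transpose_mul, Matrix.transpose_transpose, Matrix.transpose_one] at this

end RankInv

section Iso
variable {n m q : ℕ}

def Ob (C : Matrix (Fin q) (Fin n) ℂ) (A : Matrix (Fin n) (Fin n) ℂ) :
    Matrix (Fin n × Fin q) (Fin n) ℂ :=
  Matrix.of fun p j => (C * A ^ (p.1 : ℕ)) p.2 j

def Ct (A : Matrix (Fin n) (Fin n) ℂ) (B : Matrix (Fin n) (Fin m) ℂ) :
    Matrix (Fin n) (Fin n × Fin m) ℂ :=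
  Matrix.of fun i p => (A ^ (p.1 : ℕ) * B) i p.2

lemma Ob_mul_eq {a : Type*} (C : Matrix (Fin q) (Fin n) ℂ) (A : Matrix (Fin n) (Fin n) ℂ)
    (N : Matrix (Fin n) a ℂ) (p : Fin n × Fin q) (j : a) :
    (Ob C A * N) p j = (C * A ^ (p.1 : ℕ) * N) p.2 j := by
  rw [Matrix.mul_apply, Matrix.mul_apply]
  rfl

lemma mul_Ct_eq {a : Type*} (A : Matrix (Fin n) (Fin n) ℂ) (B : Matrix (Fin n) (Fin m) ℂ)
    (N : Matrix a (Fin n) ℂ) (i : a) (p : Fin n × Fin m) :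
    (N * Ct A B) i p = (N * (A ^ (p.1 : ℕ) * B)) i p.2 := by
  rw [Matrix.mul_apply, Matrix.mul_apply]
  rfl

lemma hankel_eq {A : Matrix (Fin n) (Fin n) ℂ} {B : Matrix (Fin n) (Fin m) ℂ}
    {C : Matrix (Fin q) (Fin n) ℂ}
    {A' : Matrix (Fin n) (Fin n) ℂ} {B' : Matrix (Fin n) (Fin m) ℂ}
    {C' : Matrix (Fin q) (Fin n) ℂ}
    (hM : ∀ k, C * A ^ k * B = C' * A' ^ k * B') :
    Ob C A * Ct A B = Ob C' A' * Ct A' B' := by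
  ext p p'
  rw [Ob_mul_eq, mul_Ct_eq, Ob_mul_eq, mul_Ct_eq,
    ← Matrix.mul_assoc, Matrix.mul_assoc C, ← pow_add,
    ← Matrix.mul_assoc, Matrix.mul_assoc C', ← pow_add, hM]

lemma hankel_shift_eq {A : Matrix (Fin n) (Fin n) ℂ} {B : Matrix (Fin n) (Fin m) ℂ}
    {C : Matrix (Fin q) (Fin n) ℂ}
    {A' : Matrix (Fin n) (Fin n) ℂ} {B' : Matrix (Fin n) (Fin m) ℂ}
    {C' : Matrix (Fin q) (Fin n) ℂ}
    (hM : ∀ k, C * A ^ k * B = C' * A' ^ k * B') :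
    Ob C A * A * Ct A B = Ob C' A' * A' * Ct A' B' := by
  ext p p'
  rw [mul_Ct_eq, mul_Ct_eq, Matrix.mul_assoc (Ob C A), Matrix.mul_assoc (Ob C' A'),
    Ob_mul_eq, Ob_mul_eq]
  have e : ∀ (X : Matrix (Fin q) (Fin n) ℂ) (Y : Matrix (Fin n) (Fin n) ℂ)
      (Z : Matrix (Fin n) (Fin m) ℂ) (k l : ℕ),
      X * Y ^ k * (Y * (Y ^ l * Z)) = X * Y ^ (k + 1 + l) * Z := by
    intro X Y Z k l
    simp only [← Matrix.mul_assoc]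
    rw [Matrix.mul_assoc X (Y ^ k) Y, ← pow_succ, Matrix.mul_assoc X _ (Y ^ l), ← pow_add]
  rw [e, e, hM]

lemma exists_similarity {A Ap : Matrix (Fin n) (Fin n) ℂ} {B Bp : Matrix (Fin n) (Fin m) ℂ}
    {C Cp : Matrix (Fin q) (Fin n) ℂ} (hn : 0 < n)
    (hcon : (Ct Ap Bp).rank = n) (hobs : (Ob Cp Ap).rank = n)
    (hM : ∀ k, C * A ^ k * B = Cp * Ap ^ k * Bp) :
    ∃ T : Matrix (Fin n) (Fin n) ℂ,
      IsUnit T ∧ T⁻¹ * Ap * T = A ∧ T⁻¹ * Bp = B ∧ Cp * T = C := by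
  obtain ⟨Lp, hLp⟩ := exists_left_inverse (Ob Cp Ap) (by simpa using hobs)
  obtain ⟨Rp, hRp⟩ := exists_right_inverse (Ct Ap Bp) (by simpa using hcon)
  have hOC : Ob C A * Ct A B = Ob Cp Ap * Ct Ap Bp := hankel_eq hM
  have hShift : Ob C A * A * Ct A B = Ob Cp Ap * Ap * Ct Ap Bp := hankel_shift_eq hM
  have hctrank : (Ct A B).rank = n := by
    have h1 : Lp * (Ob C A * Ct A B) * Rp = 1 := by
      rw [hOC, ← Matrix.mul_assoc, hLp, Matrix.one_mul, hRp]
    have hge : n ≤ (Ct A B).rank := by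
      calc n = (1 : Matrix (Fin n) (Fin n) ℂ).rank := by
              rw [Matrix.rank_one, Fintype.card_fin]
        _ = (Lp * (Ob C A * Ct A B) * Rp).rank := by rw [h1]
        _ ≤ (Lp * (Ob C A * Ct A B)).rank := Matrix.rank_mul_le_left _ _
        _ ≤ (Ob C A * Ct A B).rank := Matrix.rank_mul_le_right _ _
        _ ≤ (Ct A B).rank := Matrix.rank_mul_le_right _ _
    exact le_antisymm (le_trans (Matrix.rank_le_card_height _) (by simp)) hge
  obtain ⟨R, hRi⟩ := exists_right_inverse (Ct A B) (by simpa using hctrank)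
  set T := Lp * Ob C A with hT
  set T' := Ct A B * Rp with hT'
  have hTT' : T * T' = 1 := by
    rw [hT, hT', Matrix.mul_assoc Lp (Ob C A) _, ← Matrix.mul_assoc (Ob C A), hOC,
      Matrix.mul_assoc (Ob Cp Ap), hRp, Matrix.mul_one, hLp]
  have hT'T : T' * T = 1 := mul_eq_one_comm.mp hTT'
  have hUnit : IsUnit T := ⟨⟨T, T', hTT', hT'T⟩, rfl⟩
  have hTinv : T⁻¹ = T' := Matrix.inv_eq_right_inv hTT'
  have hTCt : T * Ct A B = Ct Ap Bp := by
    rw [hT, Matrix.mul_assoc, hOC, ← Matrix.mul_assoc, hLp, Matrix.one_mul]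
  have hObT : Ob C A = Ob Cp Ap * T := by
    have h2 : Ob C A * T' = Ob Cp Ap := by
      rw [hT', ← Matrix.mul_assoc, hOC, Matrix.mul_assoc, hRp, Matrix.mul_one]
    calc Ob C A = Ob C A * (T' * T) := by rw [hT'T, Matrix.mul_one]
      _ = (Ob C A * T') * T := by rw [← Matrix.mul_assoc]
      _ = Ob Cp Ap * T := by rw [h2]
  have cancel : ∀ X : Matrix (Fin n) (Fin n) ℂ,
      Lp * (Ob Cp Ap * X * Ct A B) * R = X := by
    intro X
    simp only [← Matrix.mul_assoc]
    rw [hLp, Matrix.one_mul, Matrix.mul_assoc, hRi, Matrix.mul_one]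
  have e1 : Ob Cp Ap * (Ap * T) * Ct A B = Ob Cp Ap * (T * A) * Ct A B := by
    have l1 : Ob Cp Ap * (Ap * T) * Ct A B = Ob Cp Ap * Ap * (T * Ct A B) := by
      simp only [← Matrix.mul_assoc]
    have l2 : Ob Cp Ap * (T * A) * Ct A B = (Ob Cp Ap * T) * A * Ct A B := by
      simp only [← Matrix.mul_assoc]
    rw [l1, hTCt, ← hShift, l2, ← hObT]
  have hAT : Ap * T = T * A := by
    rw [← cancel (Ap * T), e1, cancel]
  refine ⟨T, hUnit, ?_, ?_, ?_⟩
  · rw [hTinv, Matrix.mul_assoc, hAT, ← Matrix.mul_assoc, hT'T, Matrix.one_mul]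
  · have hTB : T * B = Bp := by
      ext i j
      have h3 := congrFun (congrFun hTCt i) (⟨⟨0, hn⟩, j⟩ : Fin n × Fin m)
      rw [mul_Ct_eq] at h3
      simpa [Ct, pow_zero, Matrix.one_mul] using h3
    rw [hTinv, ← hTB, ← Matrix.mul_assoc, hT'T, Matrix.one_mul]
  · ext i j
    have h4 := congrFun (congrFun hObT (⟨⟨0, hn⟩, i⟩ : Fin n × Fin q)) j
    rw [Ob_mul_eq] at h4
    simpa [Ob, pow_zero, Matrix.mul_one] using h4.symm

end Iso

section Final
variable {n m q : ℕ}

lemma map_unit_mul (T : Matrix (Fin n) (Fin n) ℂ) (hT : IsUnit T) :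
    T.map φc * (T⁻¹).map φc = 1 ∧ (T⁻¹).map φc * T.map φc = 1 := by
  have hdet : IsUnit T.det := (Matrix.isUnit_iff_isUnit_det T).mp hT
  constructor
  · rw [← Matrix.map_mul, Matrix.mul_nonsing_inv T hdet,
      Matrix.map_one _ (map_zero φc) (map_one φc)]
  · rw [← Matrix.map_mul, Matrix.nonsing_inv_mul T hdet,
      Matrix.map_one _ (map_zero φc) (map_one φc)]

lemma resMat_similar (Ap T : Matrix (Fin n) (Fin n) ℂ) (hT : IsUnit T) :
    resMat (T⁻¹ * Ap * T) = (T⁻¹).map φc * resMat Ap * T.map φc := by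
  obtain ⟨hUU', hU'U⟩ := map_unit_mul T hT
  rw [resMat, resMat, Matrix.mul_sub, Matrix.sub_mul, Matrix.mul_smul, Matrix.mul_one,
    Matrix.smul_mul, hU'U]
  congr 1
  rw [← Matrix.map_mul, ← Matrix.map_mul]

lemma resMat_similar_inv (Ap T : Matrix (Fin n) (Fin n) ℂ) (hT : IsUnit T) :
    (resMat (T⁻¹ * Ap * T))⁻¹ = (T⁻¹).map φc * (resMat Ap)⁻¹ * T.map φc := by
  obtain ⟨hUU', hU'U⟩ := map_unit_mul T hT
  rw [resMat_similar Ap T hT, Matrix.mul_inv_rev, Matrix.mul_inv_rev]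
  rw [Matrix.inv_eq_right_inv hUU', Matrix.inv_eq_right_inv hU'U]
  simp only [← Matrix.mul_assoc]

lemma realization_similar {K : Matrix (Fin q) (Fin m) (RatFunc ℂ)}
    {Ap : Matrix (Fin n) (Fin n) ℂ} {Bp : Matrix (Fin n) (Fin m) ℂ}
    {Cp : Matrix (Fin q) (Fin n) ℂ} {Dp : Matrix (Fin q) (Fin m) ℂ}
    (hR : K = Cp.map φc * (resMat Ap)⁻¹ * Bp.map φc + Dp.map φc)
    (T : Matrix (Fin n) (Fin n) ℂ) (hT : IsUnit T) :
    K = (Cp * T).map φc * (resMat (T⁻¹ * Ap * T))⁻¹ * (T⁻¹ * Bp).map φc + Dp.map φc := by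
  obtain ⟨hUU', hU'U⟩ := map_unit_mul T hT
  rw [resMat_similar_inv Ap T hT, Matrix.map_mul, Matrix.map_mul]
  rw [hR]
  congr 1
  simp only [← Matrix.mul_assoc]
  rw [Matrix.mul_assoc (Cp.map φc) (T.map φc) ((T⁻¹).map φc), hUU', Matrix.mul_one,
    Matrix.mul_assoc _ (T.map φc) ((T⁻¹).map φc), hUU', Matrix.mul_one]

end Final

/-- Given a minimal realization `(Ap,Bp,Cp,Dp)` of `K`, a real-valued realization of `K`
of state dimension `n` satisfying the support exists iff some invertible `T` makes
`(T⁻¹ Ap T, T⁻¹ Bp, Cp T, Dp)` real-valued and satisfying the support. -/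
theorem real_realizable_iff_exists_similarity {n m q : ℕ}
    (K : Matrix (Fin q) (Fin m) (RatFunc ℂ))
    (Ap : Matrix (Fin n) (Fin n) ℂ) (Bp : Matrix (Fin n) (Fin m) ℂ)
    (Cp : Matrix (Fin q) (Fin n) ℂ) (Dp : Matrix (Fin q) (Fin m) ℂ)
    (hR : IsRealization K Ap Bp Cp Dp)
    (hcon : Controllable Ap Bp) (hobs : Observable Cp Ap)
    (SA : Matrix (Fin n) (Fin n) Bool) (SB : Matrix (Fin n) (Fin m) Bool)
    (SC : Matrix (Fin q) (Fin n) Bool) (SD : Matrix (Fin q) (Fin m) Bool) :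
    (∃ (A : Matrix (Fin n) (Fin n) ℂ) (B : Matrix (Fin n) (Fin m) ℂ)
       (C : Matrix (Fin q) (Fin n) ℂ) (D : Matrix (Fin q) (Fin m) ℂ),
       IsRealization K A B C D ∧
       IsRealMatrix A ∧ IsRealMatrix B ∧ IsRealMatrix C ∧ IsRealMatrix D ∧
       SatisfiesSupport SA SB SC SD A B C D) ↔
    (∃ T : Matrix (Fin n) (Fin n) ℂ, IsUnit T ∧
       IsRealMatrix (T⁻¹ * Ap * T) ∧ IsRealMatrix (T⁻¹ * Bp) ∧
       IsRealMatrix (Cp * T) ∧ IsRealMatrix Dp ∧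
       SatisfiesSupport SA SB SC SD (T⁻¹ * Ap * T) (T⁻¹ * Bp) (Cp * T) Dp) := by
  constructor
  · rintro ⟨A, B, C, D, hReal, hrA, hrB, hrC, hrD, hsupp⟩
    have e1 : K = C.map φc * (resMat A)⁻¹ * B.map φc + D.map φc := hReal
    have e2 : K = Cp.map φc * (resMat Ap)⁻¹ * Bp.map φc + Dp.map φc := hR
    have h1 : C.map φc * (resMat A)⁻¹ * B.map φc + D.map φc
        = Cp.map φc * (resMat Ap)⁻¹ * Bp.map φc + Dp.map φc := by rw [← e1, ← e2]
    obtain ⟨hD, hMk⟩ := markov_eq (K := K) h1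
    rcases Nat.eq_zero_or_pos n with hn | hn
    · subst hn
      exact ⟨1, isUnit_one, fun i j => i.elim0, fun i j => i.elim0, fun i j => j.elim0,
        fun i j => hD ▸ hrD i j,
        ⟨fun i j _ => i.elim0, fun i j _ => i.elim0, fun i j _ => j.elim0,
          fun i j hs => hD ▸ hsupp.2.2.2 i j hs⟩⟩
    · have hc : (Ct Ap Bp).rank = n := hcon
      have ho : (Ob Cp Ap).rank = n := hobs
      obtain ⟨T, hUnit, hA, hB, hC⟩ := exists_similarity hn hc ho hMk
      refine ⟨T, hUnit, ?_, ?_, ?_, ?_, ?_⟩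
      · rw [hA]; exact hrA
      · rw [hB]; exact hrB
      · rw [hC]; exact hrC
      · rw [← hD]; exact hrD
      · rw [hA, hB, hC, ← hD]; exact hsupp
  · rintro ⟨T, hUnit, hrA, hrB, hrC, hrD, hsupp⟩
    refine ⟨T⁻¹ * Ap * T, T⁻¹ * Bp, Cp * T, Dp, ?_, hrA, hrB, hrC, hrD, hsupp⟩
    have e2 : K = Cp.map φc * (resMat Ap)⁻¹ * Bp.map φc + Dp.map φc := hR
    exact realization_similar e2 T hUnit
end
end

section
/- Let K be a q×m transfer function admitting a minimal (controllable and observable) realization of state dimension n. Then every realization of K with state dimension n is itself controllable and observable. -/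
open Matrix

set_option synthInstance.maxHeartbeats 400000

open Polynomial

set_option maxHeartbeats 1000000
set_option synthInstance.maxHeartbeats 400000

noncomputable section RealizationAux

namespace RealizationAux

abbrev F := RatFunc ℂ
abbrev φ : ℂ →+* F := (algebraMap ℂ F : ℂ →+* F)
abbrev φp : Polynomial ℂ →+* F := (algebraMap (Polynomial ℂ) F : _ →+* F)

/-- strictly proper or zero -/
def SP (f : F) : Prop := f = 0 ∨ f.intDegree < 0

lemma SP_zero : SP 0 := Or.inl rfl

lemma SP_add {x y : F} (hx : SP x) (hy : SP y) : SP (x + y) := by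
  rcases hx with rfl | hx
  · simpa using hy
  rcases hy with rfl | hy
  · rw [add_zero]; exact Or.inr hx
  by_cases hxy : x + y = 0
  · exact Or.inl hxy
  · refine Or.inr ?_
    have hy0 : y ≠ 0 := fun h => by simp [h] at hy
    exact lt_of_le_of_lt (RatFunc.intDegree_add_le hy0 hxy) (max_lt hx hy)

lemma SP_neg {x : F} (hx : SP x) : SP (-x) := by
  rcases hx with rfl | hx
  · simpa using SP_zero
  · exact Or.inr (by rwa [RatFunc.intDegree_neg])

lemma SP_sub {x y : F} (hx : SP x) (hy : SP y) : SP (x - y) := by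
  rw [sub_eq_add_neg]; exact SP_add hx (SP_neg hy)

lemma SP_mul_left {c x : F} (hc : c.intDegree ≤ 0) (hx : SP x) : SP (c * x) := by
  rcases hx with rfl | hx
  · simpa using SP_zero
  by_cases hc0 : c = 0
  · simp [hc0, SP_zero]
  by_cases hx0 : x = 0
  · simp [hx0, SP_zero]
  refine Or.inr ?_
  rw [RatFunc.intDegree_mul hc0 hx0]
  omega

lemma SP_mul_right {c x : F} (hc : c.intDegree ≤ 0) (hx : SP x) : SP (x * c) := by
  rw [mul_comm]; exact SP_mul_left hc hx

lemma SP_sum {α : Type*} (s : Finset α) (f : α → F) (h : ∀ a ∈ s, SP (f a)) :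
    SP (∑ a ∈ s, f a) := by
  classical
  induction s using Finset.induction_on with
  | empty => simpa using SP_zero
  | insert _ _ hx ih =>
    rw [Finset.sum_insert hx]
    exact SP_add (h _ (Finset.mem_insert_self _ _))
      (ih fun a ha => h a (Finset.mem_insert_of_mem ha))

lemma eq_zero_of_SP_const {c : ℂ} (h : SP (φ c)) : c = 0 := by
  have hc : φ c = RatFunc.C c := rfl
  rcases h with h | h
  · rw [hc] at h; exact (_root_.map_eq_zero RatFunc.C).mp h
  · rw [hc, RatFunc.intDegree_C] at h
    omega

variable {n : ℕ}

lemma natDegree_det_le (M : Matrix (Fin n) (Fin n) (Polynomial ℂ)) (d : Fin n → ℕ)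
    (h : ∀ i j, (M i j).natDegree ≤ d i) : M.det.natDegree ≤ ∑ i, d i := by
  rw [Matrix.det_apply']
  refine Polynomial.natDegree_sum_le_of_forall_le _ _ fun σ _ => ?_
  refine (Polynomial.natDegree_mul_le).trans ?_
  simp only [Polynomial.natDegree_intCast, zero_add]
  refine (Polynomial.natDegree_prod_le _ _).trans ?_
  rw [← Equiv.sum_comp σ d]
  exact Finset.sum_le_sum fun i _ => h (σ i) i

lemma adj_charmatrix_natDegree_le (A : Matrix (Fin n) (Fin n) ℂ) (i j : Fin n) :
    (((charmatrix A).adjugate) i j).natDegree ≤ n - 1 := by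
  rw [Matrix.adjugate_apply]
  have hb : ∀ r c, (((charmatrix A).updateRow j (Pi.single i 1)) r c).natDegree
      ≤ (fun r => if r = j then 0 else 1) r := by
    intro r c
    by_cases hr : r = j
    · subst hr
      rw [Matrix.updateRow_self]
      rcases eq_or_ne c i with hc | hc <;> simp [Pi.single_apply, hc]
    · rw [Matrix.updateRow_ne hr]
      simp only [Matrix.charmatrix_apply, hr, if_false]
      refine (Polynomial.natDegree_sub_le _ _).trans ?_
      rcases eq_or_ne r c with hrc | hrc <;>
        simp [Matrix.diagonal_apply, hrc]
  refine (natDegree_det_le _ _ hb).trans ?_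
  have hsum : (∑ r : Fin n, if r = j then 0 else 1) = (Finset.univ.erase j).card := by
    rw [Finset.card_eq_sum_ones,
      ← Finset.sum_erase (Finset.univ) (f := fun r : Fin n => if r = j then 0 else 1)
        (a := j) (by simp)]
    exact Finset.sum_congr rfl fun r hr => by simp [Finset.ne_of_mem_erase hr]
  rw [hsum, Finset.card_erase_of_mem (Finset.mem_univ _), Finset.card_univ, Fintype.card_fin]

/-- the resolvent matrix `X•1 - A`. -/
def res (A : Matrix (Fin n) (Fin n) ℂ) : Matrix (Fin n) (Fin n) F :=
  (RatFunc.X : F) • (1 : Matrix (Fin n) (Fin n) F) - A.map φ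

lemma res_eq_map (A : Matrix (Fin n) (Fin n) ℂ) : res A = (charmatrix A).map φp := by
  ext i j
  rcases eq_or_ne i j with h | h <;>
    simp [res, Matrix.charmatrix_apply, Matrix.map_apply, Matrix.diagonal_apply,
      Matrix.one_apply, h, Matrix.sub_apply, Matrix.smul_apply, smul_eq_mul]

lemma det_res (A : Matrix (Fin n) (Fin n) ℂ) : (res A).det = φp A.charpoly := by
  rw [res_eq_map, ← RingHom.mapMatrix_apply, ← RingHom.map_det]
  rfl

lemma det_res_ne (A : Matrix (Fin n) (Fin n) ℂ) : (res A).det ≠ 0 := by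
  rw [det_res]
  intro h
  exact (Matrix.charpoly_monic A).ne_zero
    ((map_eq_zero_iff φp (IsFractionRing.injective (Polynomial ℂ) F)).mp h)

lemma isUnit_det_res (A : Matrix (Fin n) (Fin n) ℂ) : IsUnit (res A).det :=
  isUnit_iff_ne_zero.mpr (det_res_ne A)

lemma res_inv_entry_SP (A : Matrix (Fin n) (Fin n) ℂ) (i j : Fin n) : SP ((res A)⁻¹ i j) := by
  rw [Matrix.inv_def, Matrix.smul_apply, smul_eq_mul, Ring.inverse_eq_inv]
  have hadj : (res A).adjugate i j = φp ((charmatrix A).adjugate i j) := by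
    rw [res_eq_map, ← RingHom.mapMatrix_apply, ← RingHom.map_adjugate]
    simp [RingHom.mapMatrix_apply]
  rw [hadj, det_res]
  by_cases h0 : (charmatrix A).adjugate i j = 0
  · exact Or.inl (by simp [h0])
  refine Or.inr ?_
  have hne : φp A.charpoly ≠ 0 := by rw [← det_res]; exact det_res_ne A
  have hne2 : φp ((charmatrix A).adjugate i j) ≠ 0 :=
    fun h => h0 ((map_eq_zero_iff φp (IsFractionRing.injective (Polynomial ℂ) F)).mp h)
  rw [RatFunc.intDegree_mul (inv_ne_zero hne) hne2]
  have hd : (φp A.charpoly).intDegree = (n : ℤ) := by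
    rw [RatFunc.intDegree_polynomial]
    simp
  have h1 : (φp A.charpoly)⁻¹.intDegree = -(n : ℤ) := by
    have h3 := RatFunc.intDegree_mul hne (inv_ne_zero hne)
    rw [mul_inv_cancel₀ hne, RatFunc.intDegree_one, hd] at h3
    omega
  have h2 : (φp ((charmatrix A).adjugate i j)).intDegree ≤ (n : ℤ) - 1 := by
    rw [RatFunc.intDegree_polynomial]
    have hle := adj_charmatrix_natDegree_le A i j
    have hn : 0 < n := i.pos
    omega
  omega

lemma res_inv_eq (A : Matrix (Fin n) (Fin n) ℂ) :
    (res A)⁻¹ = (RatFunc.X : F)⁻¹ • (1 + A.map φ * (res A)⁻¹) := by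
  have h := Matrix.mul_nonsing_inv _ (isUnit_det_res A)
  have h2 : (RatFunc.X : F) • (res A)⁻¹ = 1 + A.map φ * (res A)⁻¹ := by
    calc (RatFunc.X : F) • (res A)⁻¹ = ((RatFunc.X : F) • (1 : Matrix (Fin n) (Fin n) F)) * (res A)⁻¹ := by
          rw [smul_mul_assoc, one_mul]
      _ = res A * (res A)⁻¹ + A.map φ * (res A)⁻¹ := by
          rw [res, sub_mul, sub_add_cancel]
      _ = 1 + A.map φ * (res A)⁻¹ := by rw [h]
  rw [← h2, inv_smul_smul₀ RatFunc.X_ne_zero]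

lemma expansion {m q : ℕ} (A : Matrix (Fin n) (Fin n) ℂ) (B : Matrix (Fin n) (Fin m) ℂ)
    (C : Matrix (Fin q) (Fin n) ℂ) (N : ℕ) :
    C.map φ * (res A)⁻¹ * B.map φ
      = (∑ k ∈ Finset.range N, ((RatFunc.X : F) ^ (k+1))⁻¹ • ((C * A ^ k * B).map φ))
        + ((RatFunc.X : F) ^ N)⁻¹ • ((C * A ^ N).map φ * (res A)⁻¹ * B.map φ) := by
  induction N with
  | zero => simp
  | succ N ih =>
    rw [ih, Finset.sum_range_succ]
    have key : (C * A ^ N).map φ * (res A)⁻¹ * B.map φ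
        = (RatFunc.X : F)⁻¹ • ((C * A ^ N * B).map φ
            + (C * A ^ (N+1)).map φ * (res A)⁻¹ * B.map φ) := by
      conv_lhs => rw [res_inv_eq A]
      rw [Matrix.mul_smul, Matrix.smul_mul]
      congr 1
      rw [Matrix.mul_add, Matrix.mul_one, Matrix.add_mul]
      congr 1
      · rw [← Matrix.map_mul]
      · rw [pow_succ, ← Matrix.mul_assoc]
        simp [Matrix.map_mul, Matrix.mul_assoc]
    rw [key, smul_add, smul_add, smul_smul, smul_smul, ← mul_inv, ← pow_succ, add_assoc]

lemma intDegree_map_entry {a b : ℕ} (M : Matrix (Fin a) (Fin b) ℂ) (i : Fin a) (j : Fin b) :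
    ((M.map φ) i j).intDegree ≤ 0 := by
  have h : (M.map φ) i j = RatFunc.C (M i j) := rfl
  rw [h, RatFunc.intDegree_C]

lemma SP_mul3_entry {a b c d : ℕ} (P : Matrix (Fin a) (Fin b) F) (Q : Matrix (Fin b) (Fin c) F)
    (S : Matrix (Fin c) (Fin d) F)
    (hP : ∀ i j, (P i j).intDegree ≤ 0) (hQ : ∀ i j, SP (Q i j))
    (hS : ∀ i j, (S i j).intDegree ≤ 0) (i : Fin a) (j : Fin d) : SP ((P * Q * S) i j) := by
  rw [Matrix.mul_apply]
  refine SP_sum _ _ fun t _ => ?_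
  refine SP_mul_right (hS t j) ?_
  rw [Matrix.mul_apply]
  refine SP_sum _ _ fun u _ => ?_
  exact SP_mul_left (hP i u) (hQ u t)

lemma markov {n m q : ℕ} {A Ap : Matrix (Fin n) (Fin n) ℂ} {B Bp : Matrix (Fin n) (Fin m) ℂ}
    {C Cp : Matrix (Fin q) (Fin n) ℂ} {D Dp : Matrix (Fin q) (Fin m) ℂ}
    (h : C.map φ * (res A)⁻¹ * B.map φ + D.map φ
       = Cp.map φ * (res Ap)⁻¹ * Bp.map φ + Dp.map φ) :
    ∀ k : ℕ, C * A ^ k * B = Cp * Ap ^ k * Bp := by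
  have hSP : ∀ (j : ℕ) (i : Fin q) (l : Fin m),
      SP (((C * A ^ j).map φ * (res A)⁻¹ * B.map φ) i l) := fun j i l =>
    SP_mul3_entry _ _ _ (intDegree_map_entry _) (res_inv_entry_SP A) (intDegree_map_entry _) i l
  have hSPp : ∀ (j : ℕ) (i : Fin q) (l : Fin m),
      SP (((Cp * Ap ^ j).map φ * (res Ap)⁻¹ * Bp.map φ) i l) := fun j i l =>
    SP_mul3_entry _ _ _ (intDegree_map_entry _) (res_inv_entry_SP Ap) (intDegree_map_entry _) i l
  have hG0 : ∀ (i : Fin q) (l : Fin m), SP ((C.map φ * (res A)⁻¹ * B.map φ) i l) := by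
    intro i l
    have h0 := hSP 0 i l
    simpa using h0
  have hG0p : ∀ (i : Fin q) (l : Fin m), SP ((Cp.map φ * (res Ap)⁻¹ * Bp.map φ) i l) := by
    intro i l
    have h0 := hSPp 0 i l
    simpa using h0
  have hDp : Dp = D := by
    ext i l
    have hent := congrFun (congrFun h i) l
    simp only [Matrix.add_apply, Matrix.map_apply] at hent
    have hconst : φ (Dp i l) - φ (D i l)
        = (C.map φ * (res A)⁻¹ * B.map φ) i l - (Cp.map φ * (res Ap)⁻¹ * Bp.map φ) i l := by
      linear_combination -hent
    have hz : SP (φ (Dp i l - D i l)) := by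
      rw [map_sub, hconst]
      exact SP_sub (hG0 i l) (hG0p i l)
    have := eq_zero_of_SP_const hz
    exact sub_eq_zero.mp this
  have hG : C.map φ * (res A)⁻¹ * B.map φ = Cp.map φ * (res Ap)⁻¹ * Bp.map φ := by
    rw [hDp] at h
    exact add_right_cancel h
  intro k
  induction k using Nat.strong_induction_on with
  | _ k ih =>
    have e1 := expansion A B C (k + 1)
    have e2 := expansion Ap Bp Cp (k + 1)
    have heq := (e1.symm.trans hG).trans e2
    rw [Finset.sum_range_succ, Finset.sum_range_succ] at heq
    have hsumeq : (∑ j ∈ Finset.range k, ((RatFunc.X : F) ^ (j+1))⁻¹ • ((C * A ^ j * B).map φ))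
        = ∑ j ∈ Finset.range k, ((RatFunc.X : F) ^ (j+1))⁻¹ • ((Cp * Ap ^ j * Bp).map φ) :=
      Finset.sum_congr rfl fun j hj => by rw [ih j (Finset.mem_range.mp hj)]
    rw [hsumeq, add_assoc, add_assoc] at heq
    have heq2 := add_left_cancel heq
    rw [← smul_add, ← smul_add] at heq2
    have hXne : ((RatFunc.X : F) ^ (k + 1))⁻¹ ≠ 0 :=
      inv_ne_zero (pow_ne_zero _ RatFunc.X_ne_zero)
    have heq3 := smul_right_injective (Matrix (Fin q) (Fin m) F) hXne heq2
    ext i l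
    have hent := congrFun (congrFun heq3 i) l
    simp only [Matrix.add_apply, Matrix.map_apply] at hent
    have hconst : φ ((C * A ^ k * B) i l) - φ ((Cp * Ap ^ k * Bp) i l)
        = ((Cp * Ap ^ (k+1)).map φ * (res Ap)⁻¹ * Bp.map φ) i l
          - ((C * A ^ (k+1)).map φ * (res A)⁻¹ * B.map φ) i l := by
      linear_combination hent
    have hz : SP (φ ((C * A ^ k * B) i l - (Cp * Ap ^ k * Bp) i l)) := by
      rw [map_sub, hconst]
      exact SP_sub (hSPp (k+1) i l) (hSP (k+1) i l)
    have := eq_zero_of_SP_const hz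
    exact sub_eq_zero.mp this

def obsMat {n q : ℕ} (C : Matrix (Fin q) (Fin n) ℂ) (A : Matrix (Fin n) (Fin n) ℂ) :
    Matrix (Fin n × Fin q) (Fin n) ℂ :=
  Matrix.of fun (p : Fin n × Fin q) (j : Fin n) => (C * A ^ (p.1 : ℕ)) p.2 j

def ctrMat {n m : ℕ} (A : Matrix (Fin n) (Fin n) ℂ) (B : Matrix (Fin n) (Fin m) ℂ) :
    Matrix (Fin n) (Fin n × Fin m) ℂ :=
  Matrix.of fun (i : Fin n) (p : Fin n × Fin m) => (A ^ (p.1 : ℕ) * B) i p.2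

lemma hankel_entry {n m q : ℕ} (A : Matrix (Fin n) (Fin n) ℂ) (B : Matrix (Fin n) (Fin m) ℂ)
    (C : Matrix (Fin q) (Fin n) ℂ) (p : Fin n × Fin q) (r : Fin n × Fin m) :
    (obsMat C A * ctrMat A B) p r = (C * A ^ ((p.1 : ℕ) + (r.1 : ℕ)) * B) p.2 r.2 := by
  rw [Matrix.mul_apply]
  have hstep : (C * A ^ ((p.1 : ℕ) + (r.1 : ℕ)) * B)
      = (C * A ^ (p.1 : ℕ)) * (A ^ (r.1 : ℕ) * B) := by
    rw [pow_add]
    simp [Matrix.mul_assoc]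
  rw [hstep, Matrix.mul_apply]
  rfl

lemma rank_mul_of_ranks {n : ℕ} {α β : Type*} [Fintype α] [Fintype β]
    (O : Matrix α (Fin n) ℂ) (G : Matrix (Fin n) β ℂ)
    (hO : O.rank = n) (hG : G.rank = n) : (O * G).rank = n := by
  have hsurj : LinearMap.range G.mulVecLin = ⊤ := by
    apply Submodule.eq_top_of_finrank_eq
    rw [Module.finrank_fintype_fun_eq_card, Fintype.card_fin]
    exact hG
  rw [Matrix.rank, Matrix.mulVecLin_mul,
    LinearMap.range_comp_of_range_eq_top _ hsurj, ← Matrix.rank, hO]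

end RealizationAux

end RealizationAux


/-- If `K` admits a minimal (controllable and observable) realization of state dimension
`n`, then every realization of `K` of state dimension `n` is controllable and
observable. -/
theorem all_realizations_of_minimal_dim_minimal {n m q : ℕ}
    (K : Matrix (Fin q) (Fin m) (RatFunc ℂ))
    (hmin : ∃ (Ap : Matrix (Fin n) (Fin n) ℂ) (Bp : Matrix (Fin n) (Fin m) ℂ)
      (Cp : Matrix (Fin q) (Fin n) ℂ) (Dp : Matrix (Fin q) (Fin m) ℂ),
      IsRealization K Ap Bp Cp Dp ∧ Controllable Ap Bp ∧ Observable Cp Ap) :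
    ∀ (A : Matrix (Fin n) (Fin n) ℂ) (B : Matrix (Fin n) (Fin m) ℂ)
      (C : Matrix (Fin q) (Fin n) ℂ) (D : Matrix (Fin q) (Fin m) ℂ),
      IsRealization K A B C D → Controllable A B ∧ Observable C A := by
  classical
  obtain ⟨Ap, Bp, Cp, Dp, hreal, hctrl, hobs⟩ := hmin
  intro A B C D hr
  unfold IsRealization at hr hreal
  have h : C.map (algebraMap ℂ (RatFunc ℂ)) * (RealizationAux.res A)⁻¹ *
        B.map (algebraMap ℂ (RatFunc ℂ)) + D.map (algebraMap ℂ (RatFunc ℂ))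
      = Cp.map (algebraMap ℂ (RatFunc ℂ)) * (RealizationAux.res Ap)⁻¹ *
        Bp.map (algebraMap ℂ (RatFunc ℂ)) + Dp.map (algebraMap ℂ (RatFunc ℂ)) :=
    hr.symm.trans hreal
  have hM := RealizationAux.markov h
  have hH : RealizationAux.obsMat Cp Ap * RealizationAux.ctrMat Ap Bp
      = RealizationAux.obsMat C A * RealizationAux.ctrMat A B := by
    ext p r
    rw [RealizationAux.hankel_entry, RealizationAux.hankel_entry, ← hM]
  have hOp : (RealizationAux.obsMat Cp Ap).rank = n := hobs
  have hGp : (RealizationAux.ctrMat Ap Bp).rank = n := hctrl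
  have hHr : (RealizationAux.obsMat C A * RealizationAux.ctrMat A B).rank = n := by
    rw [← hH]
    exact RealizationAux.rank_mul_of_ranks _ _ hOp hGp
  constructor
  · show (RealizationAux.ctrMat A B).rank = n
    refine le_antisymm ((Matrix.rank_le_card_height _).trans_eq (Fintype.card_fin n)) ?_
    calc n = (RealizationAux.obsMat C A * RealizationAux.ctrMat A B).rank := hHr.symm
      _ ≤ (RealizationAux.ctrMat A B).rank := Matrix.rank_mul_le_right _ _
  · show (RealizationAux.obsMat C A).rank = n
    refine le_antisymm ((Matrix.rank_le_card_width _).trans_eq (Fintype.card_fin n)) ?_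
    calc n = (RealizationAux.obsMat C A * RealizationAux.ctrMat A B).rank := hHr.symm
      _ ≤ (RealizationAux.obsMat C A).rank := Matrix.rank_mul_le_left _ _
end
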